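/- Let ~ be a right congruence of finite index on Σ* and let ≈ be its suffix expansion. Then the function n ↦ |Σ^{≤n}/≈| is bounded by a polynomial in n if and only if ~ has no critical tuple. -/

import Mathlib

/-! Common definitions for sliding-window / visibly pushdown formalizations. -/

/-- `γ` grows polynomially: `γ(n) ∈ O(n^k)` for some `k`. -/
def GrowsPolynomially (γ : ℕ → ℕ) : Prop :=
  ∃ k C : ℕ, ∀ n : ℕ, γ n ≤ C * (n + 1) ^ k

/-- `γ` grows exponentially: there is `c > 1` with `γ(n) ≥ c^n` for infinitely many `n`. -/
def GrowsExponentially (γ : ℕ → ℕ) : Prop :=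
  ∃ c : ℝ, 1 < c ∧ ∀ m : ℕ, ∃ n : ℕ, m ≤ n ∧ c ^ n ≤ (γ n : ℝ)

/-- A set of words is suffix-closed. -/
def SuffixClosed {α : Type} (X : Set (List α)) : Prop :=
  ∀ x ∈ X, ∀ s : List α, s <:+ x → s ∈ X

/-- Domain of a partial function presented with `Option`. -/
def pdom {α β : Type} (t : List α → Option β) : Set (List α) := {x | t x ≠ none}

/-- The `t`-growth of `X`: the number of values of `t` on words of `X` of length at most `n`. -/
noncomputable def growthOf {α : Type} {Y : Type} (t : List α → Y) (X : Set (List α)) (n : ℕ) : ℕ :=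
  (t '' {x | x ∈ X ∧ x.length ≤ n}).ncard

/-- Growth of a language: number of its words of length at most `n`. -/
noncomputable def langGrowth {β : Type} (L : Set (List β)) (n : ℕ) : ℕ :=
  {y | y ∈ L ∧ y.length ≤ n}.ncard

/-- Suffix expansion of a (total or partial) function: the tuple of values on all
nonempty suffixes `a₁⋯aₙ, a₂⋯aₙ, …, aₙ` of the input. -/
def cev {α : Type} {Y : Type} (t : List α → Y) (x : List α) : List Y :=
  x.tails.dropLast.map t

/-- Image of `X` under the partial function `t`. -/
def optImage {α β : Type} (t : List α → Option β) (X : Set (List α)) : Set β :=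
  {y | ∃ x ∈ X, t x = some y}

/-- A language is bounded if it is contained in `w₁* w₂* ⋯ w_k*`. -/
def BoundedLang {β : Type} (L : Set (List β)) : Prop :=
  ∃ ws : List (List β), ∀ x ∈ L, ∃ ms : List ℕ, ms.length = ws.length ∧
    x = (List.zipWith (fun (w : List β) (m : ℕ) => (List.replicate m w).flatten) ws ms).flatten

/-- `{u,v}*`: all concatenations of copies of `u` and `v`. -/
def UVStar {α : Type} (u v : List α) : Set (List α) :=
  {w | ∃ l : List (List α), (∀ p ∈ l, p = u ∨ p = v) ∧ w = l.flatten}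

/-- `{u,v}^{≤ n}`: concatenations of at most `n` words, each equal to `u` or `v`. -/
def UVPow {α : Type} (u v : List α) (n : ℕ) : Set (List α) :=
  {w | ∃ l : List (List α), (∀ p ∈ l, p = u ∨ p = v) ∧ l.length ≤ n ∧ w = l.flatten}

/-- The set `{u₂,v₂}{u,v}* Z`. -/
def FoolingSet {α : Type} (u₂ v₂ u v : List α) (Z : Set (List α)) : Set (List α) :=
  {x | ∃ a w z, (a = u₂ ∨ a = v₂) ∧ w ∈ UVStar u v ∧ z ∈ Z ∧ x = a ++ (w ++ z)}

/-- Linear fooling scheme for a partial function `t`. -/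
def IsLinearFoolingScheme {α Y : Type} (t : List α → Option Y)
    (u₂ v₂ u v : List α) (Z : Set (List α)) : Prop :=
  u₂ <:+ u ∧ v₂ <:+ v ∧ u₂.length = v₂.length ∧
  FoolingSet u₂ v₂ u v Z ⊆ pdom t ∧
  ∃ C : ℕ, ∀ n : ℕ, ∃ z ∈ Z, z.length ≤ C * (n + 1) ∧
    ∀ w ∈ UVPow u v n, t (u₂ ++ (w ++ z)) ≠ t (v₂ ++ (w ++ z))

/-- `X` contains a linear fooling set for `t`. -/
def ContainsLinearFoolingSet {α Y : Type} (t : List α → Option Y) (X : Set (List α)) : Prop :=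
  ∃ u₂ v₂ u v Z, IsLinearFoolingScheme t u₂ v₂ u v Z ∧ FoolingSet u₂ v₂ u v Z ⊆ X

/-! ### Transducers and rational functions -/

/-- A finite-state transducer over `(α, β)` with terminal output function. -/
structure Transducer (α β : Type) where
  Q : Type
  finQ : Fintype Q
  I : Set Q
  F : Set Q
  Δ : Set (Q × List α × List β × Q)
  finΔ : Δ.Finite
  o : Q → List β

namespace Transducer

variable {α β : Type}

/-- A run from `p` to `r` with input `x` and output `y`. -/
inductive Run (A : Transducer α β) : A.Q → List α → List β → A.Q → Prop
  | nil (q : A.Q) : Run A q [] [] q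
  | cons {p q r : A.Q} {x₁ x : List α} {y₁ y : List β} :
      (p, x₁, y₁, q) ∈ A.Δ → Run A q x y r → Run A p (x₁ ++ x) (y₁ ++ y) r

/-- The transduction defined by a transducer. -/
def T (A : Transducer α β) : Set (List α × List β) :=
  {p | ∃ q₀ q y, q₀ ∈ A.I ∧ q ∈ A.F ∧ A.Run q₀ p.1 y q ∧ p.2 = y ++ A.o q}

end Transducer

/-- A partial function is rational if its graph is the transduction of some transducer. -/
def IsRationalFun {α β : Type} (t : List α → Option (List β)) : Prop :=
  ∃ A : Transducer α β, ∀ x y, t x = some y ↔ (x, y) ∈ A.T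

/-! ### Right congruences, suffix expansions, critical tuples -/

/-- A right congruence: an equivalence relation compatible with appending on the right. -/
def IsRightCongruence {α : Type} (r : List α → List α → Prop) : Prop :=
  Equivalence r ∧ ∀ x y z : List α, r x y → r (x ++ z) (y ++ z)

/-- Suffix expansion of a relation: words of the same length whose corresponding
nonempty suffixes are all related. -/
def SuffixExpansion {α : Type} (r : List α → List α → Prop) (x y : List α) : Prop :=
  x.length = y.length ∧ ∀ i < x.length, r (x.drop i) (y.drop i)

/-- Number of `r`-classes of words of length at most `n`. -/
noncomputable def classCount {α : Type} (r : List α → List α → Prop) (n : ℕ) : ℕ :=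
  Set.ncard {C : Set (List α) | ∃ x : List α, x.length ≤ n ∧ C = {y | r x y}}

/-- A relation has finite index if it has finitely many classes. -/
def FiniteIndex {α : Type} (r : List α → List α → Prop) : Prop :=
  Set.Finite {C : Set (List α) | ∃ x : List α, C = {y | r x y}}

/-- Critical tuple in a right congruence. -/
def IsCriticalTuple {α : Type} (r : List α → List α → Prop) (u₂ v₂ u v : List α) : Prop :=
  1 ≤ u₂.length ∧ u₂.length = v₂.length ∧ u₂ <:+ u ∧ v₂ <:+ v ∧
  ∀ w ∈ UVStar u v, ¬ r (u₂ ++ w) (v₂ ++ w)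

/-- The Myhill–Nerode right congruence of a language. -/
def MNrel {α : Type} (L : Set (List α)) (x y : List α) : Prop :=
  ∀ z : List α, x ++ z ∈ L ↔ y ++ z ∈ L

/-! ### Suffix distance and the canonical right congruence of a rational function -/

/-- Longest common prefix. -/
def cpre {β : Type} [DecidableEq β] : List β → List β → List β
  | a :: x, b :: y => if a = b then a :: cpre x y else []
  | _, _ => []

/-- `‖x,y‖ = |x| + |y| − 2|x ∧ y|`, where `x ∧ y` is the longest common suffix. -/
def suffDist {β : Type} [DecidableEq β] (x y : List β) : ℕ :=
  x.length + y.length - 2 * (cpre x.reverse y.reverse).length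

/-- Value of a partial function (defaulting to the empty word off the domain). -/
def pval {α β : Type} (t : List α → Option (List β)) (x : List α) : List β :=
  (t x).getD []

/-- The right congruence `R_t` of Reutenauer–Schützenberger. -/
def Rt {α β : Type} [DecidableEq β] (t : List α → Option (List β)) (u v : List α) : Prop :=
  (∀ z : List α, u ++ z ∈ pdom t ↔ v ++ z ∈ pdom t) ∧
  Set.Finite {d : ℕ | ∃ w : List α, u ++ w ∈ pdom t ∧ v ++ w ∈ pdom t ∧
      d = suffDist (pval t (u ++ w)) (pval t (v ++ w))}

/-- Two partial functions are adjacent. -/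
def Adjacent {α β : Type} [DecidableEq β] (t₁ t₂ : List α → Option (List β)) : Prop :=
  Set.Finite {d : ℕ | ∃ w : List α, w ∈ pdom t₁ ∧ w ∈ pdom t₂ ∧
      d = suffDist (pval t₁ w) (pval t₂ w)}

/-! ### Visibly pushdown automata -/

/-- Kinds of letters of a pushdown alphabet. -/
inductive VPKind : Type
  | call : VPKind
  | ret : VPKind
  | intern : VPKind
deriving DecidableEq

/-- A visibly pushdown automaton over the pushdown alphabet determined by `pa`.
The bottom-of-stack symbol `⊥` is represented implicitly by the empty stack. -/
structure VPA (α : Type) (pa : α → VPKind) where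
  Q : Type
  finQ : Fintype Q
  Γ : Type
  finΓ : Fintype Γ
  q₀ : Q
  F : Set Q
  δc : Q → α → Γ × Q
  δr : Q → α → Option Γ → Q
  δi : Q → α → Q

namespace VPA

variable {α : Type} {pa : α → VPKind}

/-- One step of the VPA on a configuration (stack with top at the head, state). -/
def step (A : VPA α pa) (c : List A.Γ × A.Q) (a : α) : List A.Γ × A.Q :=
  match pa a with
  | VPKind.call => ((A.δc c.2 a).1 :: c.1, (A.δc c.2 a).2)
  | VPKind.intern => (c.1, A.δi c.2 a)
  | VPKind.ret =>
    match c.1 with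
    | [] => ([], A.δr c.2 a none)
    | γ :: st => (st, A.δr c.2 a (some γ))

/-- Extended transition function on words. -/
def run (A : VPA α pa) (c : List A.Γ × A.Q) (w : List α) : List A.Γ × A.Q :=
  w.foldl A.step c

/-- The language accepted by a VPA (from the initial configuration `⊥q₀`). -/
def acceptsLang (A : VPA α pa) : Set (List α) :=
  {w | (A.run ([], A.q₀) w).2 ∈ A.F}

/-- Language accepted from a configuration. -/
def AccLang (A : VPA α pa) (c : List A.Γ × A.Q) : Set (List α) :=
  {w | (A.run c w).2 ∈ A.F}

/-- The reachable configurations. -/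
def rConf (A : VPA α pa) : Set (List A.Γ × A.Q) :=
  Set.range (fun w => A.run ([], A.q₀) w)

end VPA

/-- A language is a visibly pushdown language over the pushdown alphabet `pa`. -/
def IsVPL {α : Type} (pa : α → VPKind) (L : Set (List α)) : Prop :=
  ∃ A : VPA α pa, L = A.acceptsLang

/-- Well-matched words over a pushdown alphabet. -/
inductive WellMatched {α : Type} (pa : α → VPKind) : List α → Prop
  | nil : WellMatched pa []
  | intern (a : α) : pa a = VPKind.intern → WellMatched pa [a]
  | append {u v : List α} : WellMatched pa u → WellMatched pa v → WellMatched pa (u ++ v)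
  | wrap {w : List α} {a b : α} : WellMatched pa w → pa a = VPKind.call → pa b = VPKind.ret →
      WellMatched pa (a :: (w ++ [b]))

/-- Descending words: concatenations of well-matched words and return letters. -/
def Descending {α : Type} (pa : α → VPKind) (w : List α) : Prop :=
  ∃ l : List (List α),
    (∀ p ∈ l, WellMatched pa p ∨ ∃ b : α, pa b = VPKind.ret ∧ p = [b]) ∧ w = l.flatten

/-- Length-lexicographic order on configurations `⊥αq` (stacks compared bottom-first). -/
def ConfLe {Q Γ : Type} (ltQ : LinearOrder Q) (ltΓ : LinearOrder Γ)
    (c d : List Γ × Q) : Prop :=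
  c.1.length < d.1.length ∨
    (c.1.length = d.1.length ∧
      (List.Lex ltΓ.lt c.1.reverse d.1.reverse ∨ (c.1 = d.1 ∧ ltQ.le c.2 d.2)))

/-- `rep` chooses from each equivalence class of reachable configurations the
length-lexicographically least representative. -/
def IsRepFun {α : Type} {pa : α → VPKind} (A : VPA α pa)
    (ltQ : LinearOrder A.Q) (ltΓ : LinearOrder A.Γ)
    (rep : List A.Γ × A.Q → List A.Γ × A.Q) : Prop :=
  ∀ c ∈ A.rConf, rep c ∈ A.rConf ∧ A.AccLang (rep c) = A.AccLang c ∧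
    ∀ c' ∈ A.rConf, A.AccLang c' = A.AccLang c → ConfLe ltQ ltΓ (rep c) c'

/-- `ν_A(w)`: the representative of the configuration reached on `w`. -/
def nuA {α : Type} {pa : α → VPKind} (A : VPA α pa)
    (rep : List A.Γ × A.Q → List A.Γ × A.Q) (w : List α) : List A.Γ × A.Q :=
  rep (A.run ([], A.q₀) w)

/-- `σ₀(w)`: the states representing the Myhill–Nerode classes of the nonempty suffixes. -/
def sigma0 {α : Type} {pa : α → VPKind} (A : VPA α pa)
    (rep : List A.Γ × A.Q → List A.Γ × A.Q) (w : List α) : List A.Q :=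
  w.tails.dropLast.map fun s => (nuA A rep s).2

/-- `φ(w)`: the state transformation of a well-matched word. -/
def phiVPA {α : Type} {pa : α → VPKind} (A : VPA α pa) (w : List α) : A.Q → A.Q :=
  fun p => (A.run ([], p) w).2

/-- `σ₁(w) = φ(w) q₂ ⋯ qₙ`, a word over the alphabet `Q^Q ∪ Q`. -/
def sigma1 {α : Type} {pa : α → VPKind} (A : VPA α pa)
    (rep : List A.Γ × A.Q → List A.Γ × A.Q) (w : List α) : List ((A.Q → A.Q) ⊕ A.Q) :=
  Sum.inl (phiVPA A w) :: ((sigma0 A rep w).tail.map Sum.inr)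

/-! ### Real-time right transducers -/

/-- A real-time right transducer (reads its input from right to left). -/
structure RightTransducer (α β : Type) where
  Q : Type
  finQ : Fintype Q
  F : Set Q
  I : Set Q
  Δ : Set (Q × α × List β × Q)
  finΔ : Δ.Finite
  o : Q → List β

namespace RightTransducer

variable {α β : Type}

/-- Input word of a sequence of transitions. -/
def inputOf {Q : Type} (ts : List (Q × α × List β × Q)) : List α :=
  ts.map fun tr => tr.2.1

/-- Output word of a sequence of transitions. -/
def outputOf {Q : Type} (ts : List (Q × α × List β × Q)) : List β :=
  (ts.map fun tr => tr.2.2.1).flatten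

/-- `IsRunFrom A q ts p`: `ts` is a run on its input from the (rightmost) state `p`
to the (leftmost) state `q`; the transitions are listed left to right. -/
def IsRunFrom (A : RightTransducer α β) : A.Q → List (A.Q × α × List β × A.Q) → A.Q → Prop
  | q, [], p => q = p
  | q, tr :: ts, p => tr ∈ A.Δ ∧ tr.1 = q ∧ IsRunFrom A tr.2.2.2 ts p

/-- There is a run on `w` from `p` (right) to `q` (left). -/
def RunOn (A : RightTransducer α β) (q : A.Q) (w : List α) (p : A.Q) : Prop :=
  ∃ ts, A.IsRunFrom q ts p ∧ inputOf ts = w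

/-- `q ⪯ p`: there is a run from `p` to `q`. -/
def Below (A : RightTransducer α β) (q p : A.Q) : Prop :=
  ∃ w, A.RunOn q w p

/-- The partial function defined by a right transducer. -/
def Defines (A : RightTransducer α β) (t : List α → Option (List β)) : Prop :=
  ∀ x y, t x = some y ↔ ∃ p q ts, p ∈ A.F ∧ q ∈ A.I ∧ A.IsRunFrom p ts q ∧
    inputOf ts = x ∧ y = A.o p ++ outputOf ts

/-- Every state occurs on some initial accepting run. -/
def Trim (A : RightTransducer α β) : Prop :=
  ∀ s : A.Q, ∃ p q ts₁ ts₂, p ∈ A.F ∧ q ∈ A.I ∧ A.IsRunFrom p ts₁ s ∧ A.IsRunFrom s ts₂ q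

/-- Every input word has at most one initial accepting run. -/
def Unambiguous (A : RightTransducer α β) : Prop :=
  ∀ p p' q q' ts ts', p ∈ A.F → p' ∈ A.F → q ∈ A.I → q' ∈ A.I →
    A.IsRunFrom p ts q → A.IsRunFrom p' ts' q' → inputOf ts = inputOf ts' →
    p = p' ∧ ts = ts'

/-- `w` is guarded by `p`: some run on `w` from `p` stays in the SCC of `p`. -/
def Guarded (A : RightTransducer α β) (p : A.Q) (w : List α) : Prop :=
  ∃ q', A.RunOn q' w p ∧ A.Below p q'

/-- The transducer is well-behaved: the terminal outputs of guarded accepting runs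
from the same state on words of equal length coincide. -/
def WellBehaved (A : RightTransducer α β) : Prop :=
  ∀ (p q q' : A.Q) ts ts', q ∈ A.F → q' ∈ A.F →
    A.IsRunFrom q ts p → A.IsRunFrom q' ts' p →
    A.Guarded p (inputOf ts) → A.Guarded p (inputOf ts') →
    (inputOf ts).length = (inputOf ts').length →
    A.o q ++ outputOf ts = A.o q' ++ outputOf ts'

end RightTransducer

/-! ### The Parikh-like map Ψ -/

/-- `Ψ(w)`: each letter of `w` paired with its position counted from the right (1-based). -/
def Psi {α : Type} (w : List α) : Set (α × ℕ) :=
  {p | ∃ i : ℕ, w[i]? = some p.1 ∧ p.2 = w.length - i}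

/-- `Ψ(L) = ⋃_{w ∈ L} Ψ(w)`. -/
def PsiL {α : Type} (L : Set (List α)) : Set (α × ℕ) :=
  ⋃ w ∈ L, Psi w

/-! If `(u₂, v₂, u, v)` is critical, the words assembled from the equal-length blocks `v u` and
`u v` are pairwise `≈`-inequivalent: where two of them differ in a block but agree afterwards,
they have suffixes `u₂ w` and `v₂ w` at the same position, with `w ∈ {u,v}*`. This gives `2^N`
classes among words of length `N (|u| + |v|)`.

Conversely, let words act on the finitely many `~`-classes by `[y] ↦ [y s]`. For a word `x` and a
transformation `m`, let `a ≤ b` be the first and last positions whose suffix acts as `m`, so that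
`x[a..] = P x[b..]` with `P` acting trivially on `x[b..]`. If `y` has the same length and the same
`a`, `b` for `m`, its segment `P'` has the length of `P`, and both act trivially on `y[b..]`;
without critical tuples the suffixes of `P` and `P'` of equal length, followed by `y[b..]`, are then
`~`-equivalent. So `x[i..] ~ y[i..]` for `a ≤ i < b`, and the `≈`-class of `x` is determined by
`|x|` and, for each `m`, by `a`, `b` and the `~`-class of `x[b..]`: polynomially many data. -/

open Filter Asymptotics in
theorem not_growsPolynomially_of_two_pow_le {γ : ℕ → ℕ} (ℓ : ℕ) (h : ∀ N, 2 ^ N ≤ γ (N * ℓ)) :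
    ¬ GrowsPolynomially γ := by
  rintro ⟨k, C, hC⟩
  have hpoly : (fun N : ℕ => ((C * (N * ℓ + 1) ^ k : ℕ) : ℝ)) =O[atTop] fun N => (N : ℝ) ^ k := by
    refine IsBigO.of_bound (C * (ℓ + 1) ^ k) (eventually_atTop.2 ⟨1, fun N hN => ?_⟩)
    simp only [Real.norm_natCast, norm_pow, mul_assoc, ← mul_pow]
    have : N * ℓ + 1 ≤ (ℓ + 1) * N := by nlinarith
    exact_mod_cast Nat.mul_le_mul_left C (Nat.pow_le_pow_left this k)
  obtain ⟨N, hN⟩ := ((hpoly.trans_isLittleO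
    (isLittleO_pow_const_const_pow_of_one_lt k one_lt_two)).def one_half_pos).exists
  have hle : (2 : ℝ) ^ N ≤ C * (N * ℓ + 1) ^ k := by exact_mod_cast (h N).trans (hC _)
  rw [Real.norm_natCast, norm_pow, Real.norm_two] at hN
  push_cast at hN
  linarith [pow_pos (two_pos (α := ℝ)) N]

theorem Set.ncard_image_le_card_of_factor {X Y B : Type*} [Nonempty X] [Finite B] {S : Set X}
    (g : X → Y) (e : X → B) (h : ∀ x ∈ S, ∀ y ∈ S, e x = e y → g x = g y) :
    (g '' S).ncard ≤ Nat.card B := by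
  have hg : g '' S = (g ∘ Function.invFunOn e S) '' (e '' S) := by
    rw [Set.image_image]
    refine Set.image_congr fun x hx => ?_
    have hex : ∃ y ∈ S, e y = e x := ⟨x, hx, rfl⟩
    exact (h _ (Function.invFunOn_mem hex) x hx (Function.invFunOn_eq hex)).symm
  rw [hg]
  exact (Set.ncard_image_le (Set.toFinite _)).trans (Set.ncard_le_card _)

section SuffixExpansion

variable {α : Type} {r : List α → List α → Prop}

theorem Equivalence.suffixExpansion (hr : Equivalence r) : Equivalence (SuffixExpansion r) where
  refl _ := ⟨rfl, fun _ _ => hr.refl _⟩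
  symm h := ⟨h.1.symm, fun i hi => hr.symm (h.2 i (h.1 ▸ hi))⟩
  trans h h' := ⟨h.1.trans h'.1, fun i hi => hr.trans (h.2 i hi) (h'.2 i (h.1 ▸ hi))⟩

theorem SuffixExpansion.drop {x y : List α} (h : SuffixExpansion r x y) (k : ℕ) :
    SuffixExpansion r (x.drop k) (y.drop k) :=
  ⟨by simp [h.1], fun i hi => by simpa [List.drop_drop] using h.2 (k + i) (by simp at hi; omega)⟩

theorem SuffixExpansion.of_append {p p' s s' : List α} (h : SuffixExpansion r (p ++ s) (p' ++ s'))
    (hp : p.length = p'.length) : SuffixExpansion r s s' := by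
  simpa [hp] using h.drop p.length

theorem SuffixExpansion.rel_of_append {p p' s s' : List α}
    (h : SuffixExpansion r (p ++ s) (p' ++ s')) (hp : p.length = p'.length) (hs : s ≠ []) :
    r s s' := by
  simpa [hp] using h.2 p.length (by simp [List.length_pos_iff.2 hs])

theorem classCount_eq_ncard_image (r' : List α → List α → Prop) (n : ℕ) :
    classCount r' n = ((fun x => {y | r' x y}) '' {x | x.length ≤ n}).ncard := by
  unfold classCount
  congr 1
  ext C
  exact exists_congr fun x => and_congr_right fun _ => eq_comm

end SuffixExpansion

section CriticalTuple

variable {α : Type} {r : List α → List α → Prop}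

def bitWord (u v : List α) (bs : List Bool) : List α :=
  bs.flatMap fun c => if c then v ++ u else u ++ v

theorem bitWord_cons (u v : List α) (c : Bool) (bs : List Bool) :
    bitWord u v (c :: bs) = (if c then v ++ u else u ++ v) ++ bitWord u v bs :=
  List.flatMap_cons

theorem bitWord_mem_uvStar (u v : List α) (bs : List Bool) : bitWord u v bs ∈ UVStar u v := by
  refine ⟨bs.flatMap fun c => if c then [v, u] else [u, v], ?_, ?_⟩
  · intro p hp
    simp only [List.mem_flatMap] at hp
    obtain ⟨c, -, hc⟩ := hp
    cases c <;> simp at hc <;> tauto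
  · induction bs with
    | nil => rfl
    | cons c bs ih => cases c <;> simp [bitWord_cons, ih]

theorem length_bitWord (u v : List α) (bs : List Bool) :
    (bitWord u v bs).length = bs.length * (u.length + v.length) := by
  induction bs with
  | nil => simp [bitWord]
  | cons c bs ih => cases c <;> simp [bitWord_cons, ih] <;> ring

theorem IsCriticalTuple.not_suffixExpansion {u₂ v₂ u v w : List α}
    (hcrit : IsCriticalTuple r u₂ v₂ u v) (hw : w ∈ UVStar u v) :
    ¬ SuffixExpansion r (v ++ u ++ w) (u ++ v ++ w) := by
  intro h
  obtain ⟨hlen, hlen₂, ⟨u₁, rfl⟩, ⟨v₁, rfl⟩, hsep⟩ := hcrit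
  refine hsep w hw (SuffixExpansion.rel_of_append (p := v₁ ++ v₂ ++ u₁) (p' := u₁ ++ u₂ ++ v₁)
    (by simpa using h) (by simp; omega) (List.ne_nil_of_length_pos (by simp; omega)))

theorem IsCriticalTuple.eq_of_suffixExpansion_bitWord (hr : Equivalence r) {u₂ v₂ u v : List α}
    (hcrit : IsCriticalTuple r u₂ v₂ u v) {bs cs : List Bool}
    (h : SuffixExpansion r (bitWord u v bs) (bitWord u v cs)) : bs = cs := by
  have hpos : 0 < u.length + v.length := by
    have := hcrit.2.2.1.length_le; have := hcrit.1; omega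
  have hlen {bs cs : List Bool} (h : SuffixExpansion r (bitWord u v bs) (bitWord u v cs)) :
      bs.length = cs.length :=
    Nat.eq_of_mul_eq_mul_right hpos (by simpa [length_bitWord] using h.1)
  induction bs generalizing cs with
  | nil =>
    cases cs with
    | nil => rfl
    | cons d cs => exact absurd (hlen h) (by simp)
  | cons c bs ih =>
    cases cs with
    | nil => exact absurd (hlen h) (by simp)
    | cons d cs =>
      rw [bitWord_cons, bitWord_cons] at h
      have htail := ih (h.of_append (by cases c <;> cases d <;> simp [add_comm]))
      subst htail
      have hw := bitWord_mem_uvStar u v bs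
      cases c <;> cases d
      · rfl
      · exact absurd (hr.suffixExpansion.symm h) (hcrit.not_suffixExpansion hw)
      · exact absurd h (hcrit.not_suffixExpansion hw)
      · rfl

theorem two_pow_le_classCount [Finite α] (hr : Equivalence r) {u₂ v₂ u v : List α}
    (hcrit : IsCriticalTuple r u₂ v₂ u v) (N : ℕ) :
    2 ^ N ≤ classCount (SuffixExpansion r) (N * (u.length + v.length)) := by
  let cls : (Fin N → Bool) → Set (List α) :=
    fun b => {z | SuffixExpansion r (bitWord u v (List.ofFn b)) z}
  have hinj : Function.Injective cls := fun b c hbc =>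
    List.ofFn_injective <| hcrit.eq_of_suffixExpansion_bitWord hr <|
      (show bitWord u v (List.ofFn c) ∈ cls b from hbc ▸ hr.suffixExpansion.refl _)
  rw [classCount_eq_ncard_image]
  calc 2 ^ N = (Set.range cls).ncard := by simp [Set.ncard_range_of_injective hinj]
    _ ≤ _ := by
      refine Set.ncard_le_ncard ?_ ((List.finite_length_le α _).image _)
      rintro _ ⟨b, rfl⟩
      exact ⟨_, by simp [length_bitWord], rfl⟩

end CriticalTuple

theorem List.drop_eq_take_drop_append_drop {α : Type*} (z : List α) {a b : ℕ} (hab : a ≤ b) :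
    z.drop a = (z.drop a).take (b - a) ++ z.drop b := by
  conv_lhs => rw [← List.take_append_drop (b - a) (z.drop a), List.drop_drop]
  congr 2
  omega

namespace IsRightCongruence

variable {α : Type} {r : List α → List α → Prop} (hr : IsRightCongruence r)

def setoid : Setoid (List α) := ⟨r, hr.1⟩

theorem finite_quotient (hfi : FiniteIndex r) : Finite (Quotient hr.setoid) := by
  rw [(Setoid.quotientEquivClasses hr.setoid).finite_iff, Set.finite_coe_iff]
  refine hfi.subset ?_
  rintro _ ⟨y, rfl⟩
  exact ⟨y, Set.ext fun x => ⟨hr.1.symm, hr.1.symm⟩⟩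

def transition (s : List α) : Quotient hr.setoid → Quotient hr.setoid :=
  Quotient.map (· ++ s) fun a b h => hr.2 a b s h

@[simp]
theorem transition_mk (s y : List α) : hr.transition s ⟦y⟧ = ⟦y ++ s⟧ :=
  rfl

theorem transition_append (s t : List α) :
    hr.transition (s ++ t) = hr.transition t ∘ hr.transition s := by
  funext q
  induction q using Quotient.ind
  simp

theorem transition_eq_iff {s t : List α} :
    hr.transition s = hr.transition t ↔ ∀ y, r (y ++ s) (y ++ t) :=
  ⟨fun h y => Quotient.exact (congrFun h ⟦y⟧),
    fun h => funext fun q => Quotient.inductionOn q fun y => Quotient.sound (h y)⟩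

theorem transition_append_eq_of_mem_uvStar {p q s w : List α}
    (hp : hr.transition (p ++ s) = hr.transition s) (hq : hr.transition (q ++ s) = hr.transition s)
    (hw : w ∈ UVStar p q) : hr.transition (w ++ s) = hr.transition s := by
  obtain ⟨l, hl, rfl⟩ := hw
  induction l with
  | nil => rfl
  | cons b l ih =>
    have hb : hr.transition (b ++ s) = hr.transition s := by
      rcases hl b List.mem_cons_self with rfl | rfl <;> assumption
    rw [List.flatten_cons, List.append_assoc, transition_append,
      ih fun b' hb' => hl b' (.tail _ hb'), ← transition_append, hb]

theorem rel_drop_append_of_transition_eq (hnc : ¬ ∃ u₂ v₂ u v, IsCriticalTuple r u₂ v₂ u v)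
    {p q s s' : List α} (hp : hr.transition (p ++ s) = hr.transition s)
    (hq : hr.transition (q ++ s') = hr.transition s') (hs : hr.transition s = hr.transition s')
    (hpq : p.length = q.length) {i : ℕ} (hi : i < p.length) :
    r (p.drop i ++ s) (q.drop i ++ s') := by
  have hp' : hr.transition (p ++ s') = hr.transition s' := by
    rw [transition_append, ← hs, ← transition_append, hp, hs]
  refine hr.1.trans (hr.transition_eq_iff.1 hs _) ?_
  by_contra hne
  refine hnc ⟨p.drop i, q.drop i, p, q, by simp; omega, by simp [hpq], List.drop_suffix i p,
    List.drop_suffix i q, fun w hw hrw => hne ?_⟩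
  have hws := hr.transition_eq_iff.1 (hr.transition_append_eq_of_mem_uvStar hp' hq hw)
  have hrws : r (p.drop i ++ (w ++ s')) (q.drop i ++ (w ++ s')) := by simpa using hr.2 _ _ s' hrw
  exact hr.1.trans (hr.1.symm (hws (p.drop i))) (hr.1.trans hrws (hws (q.drop i)))

theorem rel_drop_of_transition_eq (hnc : ¬ ∃ u₂ v₂ u v, IsCriticalTuple r u₂ v₂ u v)
    {x y : List α} (hxy : x.length = y.length) {a i b : ℕ} (hai : a ≤ i) (hib : i < b)
    (hix : i < x.length) {m : Quotient hr.setoid → Quotient hr.setoid}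
    (hxa : hr.transition (x.drop a) = m) (hxb : hr.transition (x.drop b) = m)
    (hya : hr.transition (y.drop a) = m) (hyb : hr.transition (y.drop b) = m) :
    r (x.drop i) (y.drop i) := by
  let seg (z : List α) := (z.drop a).take (b - a)
  have hseg (z : List α) : z.drop a = seg z ++ z.drop b :=
    List.drop_eq_take_drop_append_drop z (hai.trans hib.le)
  have hseg_len : (seg x).length = (seg y).length := by simp [seg, hxy]
  have hi_lt : i - a < (seg x).length := by simp [seg]; omega
  have hdrop (z : List α) (hz : i - a ≤ (seg z).length) :
      z.drop i = (seg z).drop (i - a) ++ z.drop b := by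
    rw [← List.drop_append_of_le_length hz, ← hseg, List.drop_drop]
    congr 1
    omega
  rw [hdrop x hi_lt.le, hdrop y (hseg_len ▸ hi_lt.le)]
  exact hr.rel_drop_append_of_transition_eq hnc (by rw [← hseg, hxa, hxb])
    (by rw [← hseg, hya, hyb]) (hxb.trans hyb.symm) hseg_len hi_lt

open scoped Classical in
noncomputable def occurrences (n : ℕ) (x : List α) (m : Quotient hr.setoid → Quotient hr.setoid) :
    Finset (Fin (n + 1)) :=
  {j | hr.transition (x.drop j) = m}

noncomputable def profile (n : ℕ) (x : List α) (m : Quotient hr.setoid → Quotient hr.setoid) :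
    WithTop (Fin (n + 1)) × WithBot (Fin (n + 1)) × WithBot (Quotient hr.setoid) :=
  ((hr.occurrences n x m).min, (hr.occurrences n x m).max,
    (hr.occurrences n x m).max.map fun b : Fin (n + 1) => ⟦x.drop b⟧)

theorem suffixExpansion_of_profile_eq (hnc : ¬ ∃ u₂ v₂ u v, IsCriticalTuple r u₂ v₂ u v)
    {n : ℕ} {x y : List α} (hx : x.length ≤ n) (hxy : x.length = y.length)
    (h : hr.profile n x = hr.profile n y) : SuffixExpansion r x y := by
  refine ⟨hxy, fun i hi => ?_⟩
  set m := hr.transition (x.drop i)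
  have hi_occ : (⟨i, by omega⟩ : Fin (n + 1)) ∈ hr.occurrences n x m := by simp [occurrences, m]
  obtain ⟨a, ha⟩ := Finset.min_of_mem hi_occ
  obtain ⟨b, hb⟩ := Finset.max_of_mem hi_occ
  obtain ⟨hmin, hmax, hcls⟩ : _ ∧ _ ∧ _ := by simpa [profile] using congrFun h m
  have hai : a ≤ i := Fin.le_def.1 (Finset.min_le_of_eq hi_occ ha)
  have hib : i ≤ b := Fin.le_def.1 (Finset.le_max_of_eq hi_occ hb)
  have occ {z : List α} {j : Fin (n + 1)} (hj : j ∈ hr.occurrences n z m) :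
      hr.transition (z.drop j) = m := by simpa [occurrences] using hj
  rcases hib.lt_or_eq with hib | rfl
  · exact hr.rel_drop_of_transition_eq hnc hxy hai hib hi (occ (Finset.mem_of_min ha))
      (occ (Finset.mem_of_max hb)) (occ (Finset.mem_of_min (hmin ▸ ha)))
      (occ (Finset.mem_of_max (hmax ▸ hb)))
  · rw [hb, ← hmax, hb, WithBot.map_coe, WithBot.map_coe, WithBot.coe_inj] at hcls
    exact Quotient.exact hcls

theorem classCount_suffixExpansion_le (hnc : ¬ ∃ u₂ v₂ u v, IsCriticalTuple r u₂ v₂ u v)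
    [Finite (Quotient hr.setoid)] (n : ℕ) :
    classCount (SuffixExpansion r) n ≤ Nat.card (Fin (n + 1) ×
      ((Quotient hr.setoid → Quotient hr.setoid) →
        WithTop (Fin (n + 1)) × WithBot (Fin (n + 1)) × WithBot (Quotient hr.setoid))) := by
  rw [classCount_eq_ncard_image]
  refine Set.ncard_image_le_card_of_factor _ (fun x => (Fin.ofNat (n + 1) x.length, hr.profile n x))
    fun x hx y hy hxy => ?_
  have hlen : x.length = y.length := by
    simpa [Fin.val_ofNat, Nat.mod_eq_of_lt (Nat.lt_succ_of_le hx),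
      Nat.mod_eq_of_lt (Nat.lt_succ_of_le hy)] using congrArg Fin.val (Prod.ext_iff.1 hxy).1
  have hse := hr.suffixExpansion_of_profile_eq hnc hx hlen (Prod.ext_iff.1 hxy).2
  have hequiv := hr.1.suffixExpansion
  exact Set.ext fun z => ⟨hequiv.trans (hequiv.symm hse), hequiv.trans hse⟩

end IsRightCongruence

theorem IsRightCongruence.growsPolynomially_classCount_suffixExpansion {α : Type}
    {r : List α → List α → Prop} (hr : IsRightCongruence r) (hfi : FiniteIndex r)
    (hnc : ¬ ∃ u₂ v₂ u v, IsCriticalTuple r u₂ v₂ u v) :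
    GrowsPolynomially (classCount (SuffixExpansion r)) := by
  have := hr.finite_quotient hfi
  set q := Nat.card (Quotient hr.setoid)
  refine ⟨2 * q ^ q + 1, (4 * (q + 1)) ^ q ^ q,
    fun n => (hr.classCount_suffixExpansion_le hnc n).trans ?_⟩
  have hbot : Nat.card (WithBot (Quotient hr.setoid)) = q + 1 := Finite.card_option
  have htop : Nat.card (WithTop (Fin (n + 1))) = n + 2 := Finite.card_option.trans (by simp)
  have hbot' : Nat.card (WithBot (Fin (n + 1))) = n + 2 := Finite.card_option.trans (by simp)
  simp only [Nat.card_prod, Nat.card_fun, Nat.card_fin, hbot, htop, hbot']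
  calc (n + 1) * ((n + 2) * ((n + 2) * (q + 1))) ^ q ^ q
      ≤ (n + 1) * ((2 * (n + 1)) * ((2 * (n + 1)) * (q + 1))) ^ q ^ q := by gcongr <;> omega
    _ = (n + 1) * (4 * (q + 1) * (n + 1) ^ 2) ^ q ^ q := by ring
    _ = (4 * (q + 1)) ^ q ^ q * (n + 1) ^ (2 * q ^ q + 1) := by rw [mul_pow, ← pow_mul]; ring

/-- for a finite-index right congruence `~` with suffix expansion
`≈`, the map `n ↦ |Σ^{≤n}/≈|` is polynomially bounded iff `~` has no critical
tuple. -/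
theorem statement9 {α : Type} [Fintype α] (r : List α → List α → Prop)
    (hrc : IsRightCongruence r) (hfi : FiniteIndex r) :
    GrowsPolynomially (classCount (SuffixExpansion r)) ↔
      ¬ ∃ u₂ v₂ u v, IsCriticalTuple r u₂ v₂ u v := by
  refine ⟨fun hpoly ⟨u₂, v₂, u, v, hcrit⟩ => ?_,
    hrc.growsPolynomially_classCount_suffixExpansion hfi⟩
  exact not_growsPolynomially_of_two_pow_le _ (two_pow_le_classCount hrc.1 hcrit) hpoly
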